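/- arXiv:2107.12673 — 2 statements merged into one kernel-verified Lean document; each statement's English description precedes it below -/
import Mathlib

section
/- If Slater's condition holds (there exists m in the interior of X₁ with S₁(m) < κ), then the concave dual function g(λ) is strictly decreasing for all sufficiently large λ, and hence the supremum of g over λ ≥ 0 is attained at some λ* ≥ 0. -/
/-!
The dual function is the infimum over the compact set `X₁` of the functions
`λ ↦ S₀ m + λ (S₁ m - κ)`, affine in `λ`, so it is upper semicontinuous and every value is attained
by some minimiser `m_λ`. Comparing `m_λ` with the Slater point `m₀` shows that `S₁ m_λ < κ` once
`λ` is large; then `g μ ≤ S₀ m_λ + μ (S₁ m_λ - κ) < g λ` for `μ > λ`. Hence `g` is strictly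
decreasing on a half-line `[λ₀, ∞)`, and its supremum over `[0, ∞)` is its maximum over the
compact interval `[0, λ₀]`.
-/

open Set

/-- The relaxed feasible set `X₁ = {m ∈ [0,1]^D : ‖m‖₁ ≤ σ}`. -/
def maskSetX1 (D σ : ℕ) : Set (Fin D → ℝ) :=
  {m | (∀ i, m i ∈ Set.Icc (0 : ℝ) 1) ∧ ∑ i, |m i| ≤ (σ : ℝ)}

/-- The dual function `g(λ) = inf_{m ∈ X₁} [S₀(m) + λ(S₁(m) − κ)]`. -/
noncomputable def dualFun (D σ : ℕ) (κ : ℝ) (S0 S1 : (Fin D → ℝ) →ₗ[ℝ] ℝ) (lam : ℝ) : ℝ :=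
  sInf ((fun m => S0 m + lam * (S1 m - κ)) '' maskSetX1 D σ)

theorem isCompact_maskSetX1 (D σ : ℕ) : IsCompact (maskSetX1 D σ) := by
  have hcube : IsCompact (univ.pi fun _ : Fin D => Icc (0 : ℝ) 1) :=
    isCompact_univ_pi fun _ => isCompact_Icc
  have hball : IsClosed {m : Fin D → ℝ | ∑ i, |m i| ≤ (σ : ℝ)} :=
    isClosed_le (continuous_finsetSum _ fun i _ => (continuous_apply i).abs) continuous_const
  have hX : maskSetX1 D σ = (univ.pi fun _ : Fin D => Icc (0 : ℝ) 1) ∩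
      {m : Fin D → ℝ | ∑ i, |m i| ≤ (σ : ℝ)} := by
    ext m
    simp [maskSetX1, Pi.le_def, forall_and]
  rw [hX]
  exact hcube.inter_right hball

section LagrangeDual

variable {E : Type*} [TopologicalSpace E] {X : Set E} {a b : E → ℝ}

/-- The Lagrange dual of minimising `a` on `X` subject to `b ≤ 0`. -/
noncomputable def lagrangeDual (X : Set E) (a b : E → ℝ) (lam : ℝ) : ℝ :=
  sInf ((fun m => a m + lam * b m) '' X)

theorem lagrangeDual_le (hX : IsCompact X) (ha : ContinuousOn a X) (hb : ContinuousOn b X)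
    {m : E} (hm : m ∈ X) (lam : ℝ) : lagrangeDual X a b lam ≤ a m + lam * b m :=
  csInf_le (hX.bddBelow_image (ha.add (continuousOn_const.mul hb))) (mem_image_of_mem _ hm)

theorem exists_lagrangeDual_eq (hX : IsCompact X) (hne : X.Nonempty) (ha : ContinuousOn a X)
    (hb : ContinuousOn b X) (lam : ℝ) : ∃ m ∈ X, a m + lam * b m = lagrangeDual X a b lam :=
  (hX.image_of_continuousOn (ha.add (continuousOn_const.mul hb))).sInf_mem (hne.image _)

theorem upperSemicontinuous_lagrangeDual (hX : IsCompact X) (ha : ContinuousOn a X)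
    (hb : ContinuousOn b X) : UpperSemicontinuous (lagrangeDual X a b) := by
  have hiInf : lagrangeDual X a b = fun lam => ⨅ m : X, a m + lam * b m := by
    funext lam
    rw [lagrangeDual, image_eq_range]
    rfl
  rw [hiInf]
  refine upperSemicontinuous_ciInf (fun lam => ?_) fun m => ?_
  · have hbdd : BddBelow ((fun m => a m + lam * b m) '' X) :=
      hX.bddBelow_image (ha.add (continuousOn_const.mul hb))
    rwa [image_eq_range] at hbdd
  · exact (continuous_const.add (continuous_id.mul continuous_const)).upperSemicontinuous

theorem exists_strictAntiOn_lagrangeDual (hX : IsCompact X) (ha : ContinuousOn a X)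
    (hb : ContinuousOn b X) {m₀ : E} (hm₀ : m₀ ∈ X) (hb₀ : b m₀ < 0) :
    ∃ lam₀, 0 ≤ lam₀ ∧ StrictAntiOn (lagrangeDual X a b) (Ici lam₀) := by
  obtain ⟨B, hB⟩ := hX.exists_bound_of_continuousOn ha
  have hB₀ : 0 ≤ B := (norm_nonneg _).trans (hB m₀ hm₀)
  set lam₀ := (2 * B + 1) / -b m₀
  have hlam₀_nonneg : 0 ≤ lam₀ := div_nonneg (by linarith) (by linarith)
  have hlam₀ : lam₀ * -b m₀ = 2 * B + 1 := div_mul_cancel₀ _ (neg_ne_zero.2 hb₀.ne)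
  -- a minimiser `m` does at least as well as `m₀`, which for large `λ` forces `b m < 0`
  have hminimiser_neg : ∀ lam ∈ Ici lam₀, ∀ m ∈ X,
      a m + lam * b m = lagrangeDual X a b lam → b m < 0 := by
    intro lam hlam m hm hmin
    have hle := hmin ▸ lagrangeDual_le hX ha hb hm₀ lam
    have ham := abs_le.1 (Real.norm_eq_abs _ ▸ hB m hm)
    have ham₀ := abs_le.1 (Real.norm_eq_abs _ ▸ hB m₀ hm₀)
    have hlarge : lam₀ * -b m₀ ≤ lam * -b m₀ := mul_le_mul_of_nonneg_right hlam (by linarith)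
    have hneg : lam * b m < 0 := by linarith
    exact neg_of_mul_neg_right hneg (hlam₀_nonneg.trans hlam)
  refine ⟨lam₀, hlam₀_nonneg, fun lam hlam mu hmu hlt => ?_⟩
  obtain ⟨m, hm, hmin⟩ := exists_lagrangeDual_eq hX ⟨m₀, hm₀⟩ ha hb lam
  have hbm := hminimiser_neg lam hlam m hm hmin
  calc lagrangeDual X a b mu ≤ a m + mu * b m := lagrangeDual_le hX ha hb hm mu
    _ < a m + lam * b m := by linarith [mul_lt_mul_of_neg_right hlt hbm]
    _ = lagrangeDual X a b lam := hmin

end LagrangeDual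

theorem exists_isMaxOn_Ici_of_antitoneOn {α : Type*} [LinearOrder α] [TopologicalSpace α]
    [CompactIccSpace α] {β : Type*} [LinearOrder β] {f : α → β} {x y : α} (hxy : x ≤ y)
    (hf : UpperSemicontinuousOn f (Icc x y)) (hanti : AntitoneOn f (Ici y)) :
    ∃ c ∈ Icc x y, IsMaxOn f (Ici x) c := by
  obtain ⟨c, hc, hmax⟩ := hf.exists_isMaxOn (nonempty_Icc.2 hxy) isCompact_Icc
  refine ⟨c, hc, fun z (hz : x ≤ z) => ?_⟩
  rcases le_total z y with hzy | hyz
  · exact hmax ⟨hz, hzy⟩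
  · exact (hanti self_mem_Ici hyz hyz).trans (hmax (right_mem_Icc.2 hxy))

theorem dual_sup_attained_of_slater_general
    (D : ℕ) (σ : ℕ) (κ : ℝ)
    (S0 S1 : (Fin D → ℝ) →ₗ[ℝ] ℝ)
    (hslater : ∃ m ∈ interior (maskSetX1 D σ), S1 m < κ) :
    (∃ lam0 : ℝ, 0 ≤ lam0 ∧
        StrictAntiOn (dualFun D σ κ S0 S1) (Set.Ici lam0)) ∧
      ∃ lamStar : ℝ, 0 ≤ lamStar ∧
        ∀ lam : ℝ, 0 ≤ lam → dualFun D σ κ S0 S1 lam ≤ dualFun D σ κ S0 S1 lamStar := by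
  obtain ⟨m₀, hm₀, hS1m₀⟩ := hslater
  have hdual : dualFun D σ κ S0 S1 = lagrangeDual (maskSetX1 D σ) S0 fun m => S1 m - κ := rfl
  have hX := isCompact_maskSetX1 D σ
  have hS0 : ContinuousOn S0 (maskSetX1 D σ) := S0.continuous_of_finiteDimensional.continuousOn
  have hS1 : ContinuousOn (fun m => S1 m - κ) (maskSetX1 D σ) :=
    (S1.continuous_of_finiteDimensional.sub continuous_const).continuousOn
  obtain ⟨lam₀, hlam₀, hanti⟩ :=
    exists_strictAntiOn_lagrangeDual hX hS0 hS1 (interior_subset hm₀) (sub_neg.2 hS1m₀)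
  obtain ⟨lamStar, hlamStar, hmax⟩ := exists_isMaxOn_Ici_of_antitoneOn hlam₀
    ((upperSemicontinuous_lagrangeDual hX hS0 hS1).upperSemicontinuousOn _) hanti.antitoneOn
  rw [hdual]
  exact ⟨⟨lam₀, hlam₀, hanti⟩, lamStar, hlamStar.1, fun lam hlam => hmax hlam⟩

/-- if Slater's condition holds (some `m` in the interior of `X₁`
satisfies `S₁(m) < κ`), then `g` is strictly decreasing for all sufficiently
large `λ`, and the supremum of `g` over `λ ≥ 0` is attained at some `λ* ≥ 0`. -/
theorem dual_sup_attained_of_slater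
    (D : ℕ) (σ : ℕ) (hσ1 : 1 ≤ σ) (hσD : σ ≤ D) (κ : ℝ)
    (S0 S1 : (Fin D → ℝ) →ₗ[ℝ] ℝ)
    (hslater : ∃ m ∈ interior (maskSetX1 D σ), S1 m < κ) :
    (∃ lam0 : ℝ, 0 ≤ lam0 ∧
        StrictAntiOn (dualFun D σ κ S0 S1) (Set.Ici lam0)) ∧
      ∃ lamStar : ℝ, 0 ≤ lamStar ∧
        ∀ lam : ℝ, 0 ≤ lam → dualFun D σ κ S0 S1 lam ≤ dualFun D σ κ S0 S1 lamStar :=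
  dual_sup_attained_of_slater_general D σ κ S0 S1 hslater
end

section
/- If κ ≥ κ_max := max over I ∈ σ-argmin{i : s_i⁽⁰⁾ < 0} of Σ_{i∈I} s_i⁽¹⁾, then there exists a solution of the unconstrained problem min_{m ∈ X} S₀(m) that also satisfies S₁(m) ≤ κ, and hence the constrained and unconstrained problems have the same optimal value. -/
/-- The discrete feasible set `X = {m ∈ {0,1}^D : ‖m‖₀ ≤ σ}`. -/
def maskSetX (D σ : ℕ) : Set (Fin D → ℝ) :=
  {m | (∀ i, m i = 0 ∨ m i = 1) ∧ (Finset.univ.filter (fun i => m i ≠ 0)).card ≤ σ}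

/-- `I` is a `σ`-argmin set for the scores `α`: it consists of indices with
`α i < 0`, has cardinality `min σ #{i : α i < 0}`, and attains the smallest
values among the negative ones. -/
def IsSigmaArgmin {D : ℕ} (σ : ℕ) (α : Fin D → ℝ) (I : Finset (Fin D)) : Prop :=
  (∀ i ∈ I, α i < 0) ∧
    I.card = min σ (Finset.univ.filter (fun i => α i < 0)).card ∧
    ∀ j ∈ I, ∀ i ∉ I, α i < 0 → α j ≤ α i

/-! A σ-argmin set `I` of the scores `s⁽⁰⁾` minimises `∑_{i ∈ J} s_i⁽⁰⁾` over all `J` with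
`#J ≤ σ`: nonnegative scores can only be dropped, and an exchange argument compares `I` with
the negative part of `J`. Since `X` consists exactly of the indicator vectors of such `J`,
the indicator of `I` minimises `S₀` on `X`, and `κ ≥ κ_max` says that it is feasible for the
constraint `S₁ ≤ κ`. -/

open Finset

section Exchange

variable {ι M : Type*} [AddCommGroup M] [LinearOrder M] [IsOrderedAddMonoid M]

theorem Finset.exists_subset_card_eq_forall_le [DecidableEq ι] (α : ι → M) (N : Finset ι)
    {k : ℕ} (hk : k ≤ #N) : ∃ I ⊆ N, #I = k ∧ ∀ j ∈ I, ∀ i ∈ N \ I, α j ≤ α i := by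
  -- a `k`-subset of least `∑ α` cannot be improved by swapping `j ∈ I` for `i ∉ I`
  obtain ⟨I, hI, hmin⟩ :=
    (N.powersetCard k).exists_min_image (fun I => ∑ i ∈ I, α i) (powersetCard_nonempty.2 hk)
  obtain ⟨hIN, hIk⟩ := mem_powersetCard.1 hI
  refine ⟨I, hIN, hIk, fun j hj i hi => ?_⟩
  obtain ⟨hiN, hiI⟩ := mem_sdiff.1 hi
  have hiJ : i ∉ I.erase j := fun h => hiI (mem_of_mem_erase h)
  have hswap : insert i (I.erase j) ∈ N.powersetCard k := by
    refine mem_powersetCard.2 ⟨insert_subset hiN ((erase_subset j I).trans hIN), ?_⟩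
    rw [card_insert_of_notMem hiJ, card_erase_of_mem hj, hIk]
    have : 0 < k := hIk ▸ card_pos.2 ⟨j, hj⟩
    omega
  have := hmin _ hswap
  rw [sum_insert hiJ, ← add_sum_erase I α hj] at this
  exact le_of_add_le_add_right this

theorem Finset.sum_le_sum_of_card_le_of_forall_le {α : ι → M} {P Q : Finset ι} (hcard : #Q ≤ #P)
    (hP : ∀ p ∈ P, α p ≤ 0) (hPQ : ∀ p ∈ P, ∀ q ∈ Q, α p ≤ α q) :
    ∑ p ∈ P, α p ≤ ∑ q ∈ Q, α q := by
  rcases P.eq_empty_or_nonempty with rfl | hne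
  · rw [card_eq_zero.1 (Nat.le_zero.1 hcard)]
  obtain ⟨p₀, hp₀, hmax⟩ := P.exists_max_image α hne
  calc ∑ p ∈ P, α p ≤ #P • α p₀ := sum_le_card_nsmul P α _ hmax
    _ ≤ #Q • α p₀ := nsmul_le_nsmul_left_of_nonpos (hP p₀ hp₀) hcard
    _ ≤ ∑ q ∈ Q, α q := card_nsmul_le_sum Q α _ (hPQ p₀ hp₀)

end Exchange

theorem exists_isSigmaArgmin {D : ℕ} (σ : ℕ) (α : Fin D → ℝ) : ∃ I, IsSigmaArgmin σ α I := by
  obtain ⟨I, hIN, hcard, hmin⟩ := exists_subset_card_eq_forall_le α {i | α i < 0}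
    (min_le_right σ #{i | α i < 0})
  refine ⟨I, fun i hi => (mem_filter.1 (hIN hi)).2, hcard, fun j hj i hiI hi => ?_⟩
  exact hmin j hj i (mem_sdiff.2 ⟨mem_filter.2 ⟨mem_univ i, hi⟩, hiI⟩)

namespace IsSigmaArgmin

variable {D σ : ℕ} {α : Fin D → ℝ} {I : Finset (Fin D)}

theorem card_le (h : IsSigmaArgmin σ α I) : #I ≤ σ :=
  h.2.1 ▸ min_le_left _ _

theorem sum_le_of_subset (h : IsSigmaArgmin σ α I) {A : Finset (Fin D)}
    (hA : A ⊆ univ.filter (fun i => α i < 0)) (hcard : #A ≤ #I) :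
    ∑ i ∈ I, α i ≤ ∑ i ∈ A, α i := by
  obtain ⟨hneg, -, hmin⟩ := h
  have hexch : ∑ i ∈ I \ A, α i ≤ ∑ i ∈ A \ I, α i := by
    refine sum_le_sum_of_card_le_of_forall_le (card_sdiff_le_card_sdiff_iff.2 hcard)
      (fun p hp => (hneg p (mem_sdiff.1 hp).1).le) fun p hp q hq => ?_
    obtain ⟨hqA, hqI⟩ := mem_sdiff.1 hq
    exact hmin p (mem_sdiff.1 hp).1 q hqI (mem_filter.1 (hA hqA)).2
  rw [← sum_inter_add_sum_sdiff I A, ← sum_inter_add_sum_sdiff A I, inter_comm]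
  exact add_le_add le_rfl hexch

theorem sum_le (h : IsSigmaArgmin σ α I) {J : Finset (Fin D)} (hJ : #J ≤ σ) :
    ∑ i ∈ I, α i ≤ ∑ i ∈ J, α i := by
  have hneg : J.filter (α · < 0) ⊆ univ.filter (α · < 0) := filter_subset_filter _ (subset_univ J)
  have hcard : #(J.filter (α · < 0)) ≤ #I :=
    h.2.1 ▸ le_min ((card_filter_le J _).trans hJ) (card_le_card hneg)
  calc ∑ i ∈ I, α i ≤ ∑ i ∈ J.filter (α · < 0), α i := h.sum_le_of_subset hneg hcard
    _ ≤ ∑ i ∈ J, α i :=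
        sum_le_sum_of_subset_of_nonneg (filter_subset _ J)
          fun i hi hiA => not_lt.1 fun hi' => hiA (mem_filter.2 ⟨hi, hi'⟩)

end IsSigmaArgmin

theorem maskSetX_eq_image (D σ : ℕ) :
    maskSetX D σ = (fun I => ∑ i ∈ I, Pi.single i (1 : ℝ)) '' {I : Finset (Fin D) | #I ≤ σ} := by
  have hsum (I : Finset (Fin D)) (j : Fin D) :
      (∑ i ∈ I, Pi.single i (1 : ℝ)) j = if j ∈ I then 1 else 0 := by
    rw [Finset.sum_apply, sum_pi_single]
  ext m
  constructor
  · rintro ⟨h01, hcard⟩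
    refine ⟨_, hcard, funext fun j => ?_⟩
    rcases h01 j with h | h <;> simp [hsum, h]
  · rintro ⟨I, hI, rfl⟩
    refine ⟨fun j => by dsimp only; rw [hsum]; split_ifs <;> simp, ?_⟩
    convert hI.out using 2
    ext j
    simp [hsum]

theorem kappa_max_unconstrained_general
    (D : ℕ) (σ : ℕ) (κ : ℝ)
    (S0 S1 : (Fin D → ℝ) →ₗ[ℝ] ℝ)
    (s0 s1 : Fin D → ℝ)
    (hs0 : ∀ i, s0 i = S0 (Pi.single i 1))
    (hs1 : ∀ i, s1 i = S1 (Pi.single i 1))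
    (hκ : ∀ I : Finset (Fin D), IsSigmaArgmin σ s0 I → (∑ i ∈ I, s1 i) ≤ κ) :
    ∃ m ∈ maskSetX D σ, S1 m ≤ κ ∧ (∀ m' ∈ maskSetX D σ, S0 m ≤ S0 m') ∧
      S0 m = sInf (S0 '' maskSetX D σ) ∧
      S0 m = sInf (S0 '' {m' ∈ maskSetX D σ | S1 m' ≤ κ}) := by
  obtain ⟨I, hI⟩ := exists_isSigmaArgmin σ s0
  set m : Fin D → ℝ := ∑ i ∈ I, Pi.single i 1
  have hmX : m ∈ maskSetX D σ := maskSetX_eq_image D σ ▸ ⟨I, hI.card_le, rfl⟩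
  have hS1 : S1 m ≤ κ := by simpa [m, hs1] using hκ I hI
  have hopt : ∀ m' ∈ maskSetX D σ, S0 m ≤ S0 m' := by
    rw [maskSetX_eq_image]
    rintro _ ⟨J, hJ, rfl⟩
    simpa [m, hs0] using hI.sum_le hJ
  have hinf {s} (hs : s ⊆ maskSetX D σ) (hm : m ∈ s) : S0 m = sInf (S0 '' s) :=
    (IsLeast.csInf_eq
      ⟨Set.mem_image_of_mem S0 hm, Set.forall_mem_image.2 fun _ h => hopt _ (hs h)⟩).symm
  exact ⟨m, hmX, hS1, hopt, hinf subset_rfl hmX, hinf (Set.sep_subset _ _) ⟨hmX, hS1⟩⟩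

/-- if `κ ≥ κ_max`, i.e. `κ ≥ ∑_{i∈I} s_i⁽¹⁾` for every
`I ∈ σ-argmin{i : s_i⁽⁰⁾ < 0}`, then some solution of the unconstrained
problem `min_{m ∈ X} S₀(m)` also satisfies `S₁(m) ≤ κ`; hence the constrained
and unconstrained problems have the same optimal value. -/
theorem kappa_max_unconstrained
    (D : ℕ) (σ : ℕ) (hσ1 : 1 ≤ σ) (hσD : σ ≤ D) (κ : ℝ)
    (S0 S1 : (Fin D → ℝ) →ₗ[ℝ] ℝ)
    (s0 s1 : Fin D → ℝ)
    (hs0 : ∀ i, s0 i = S0 (Pi.single i 1))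
    (hs1 : ∀ i, s1 i = S1 (Pi.single i 1))
    (hκ : ∀ I : Finset (Fin D), IsSigmaArgmin σ s0 I → (∑ i ∈ I, s1 i) ≤ κ) :
    ∃ m ∈ maskSetX D σ, S1 m ≤ κ ∧ (∀ m' ∈ maskSetX D σ, S0 m ≤ S0 m') ∧
      S0 m = sInf (S0 '' maskSetX D σ) ∧
      S0 m = sInf (S0 '' {m' ∈ maskSetX D σ | S1 m' ≤ κ}) :=
  kappa_max_unconstrained_general D σ κ S0 S1 s0 s1 hs0 hs1 hκ
end
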